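/- The MaxSwap rule is reverse stable: for every profile P, MaxSwap(P) = MaxSwap(P̄), where P̄ is the profile obtained from P by reversing every voter's ranking (the candidate at position i moves to position m+1−i). -/
import Mathlib

open Finset

/-- A profile assigns to each voter a ranking of the `m` candidates, i.e. a bijection
from the candidate set `C` to the positions `Fin m` (position `0` = most preferred,
so the 1-based position of `a` in the ranking `r` is `(r a : ℕ) + 1`). -/
abbrev Profile (V C : Type*) (m : ℕ) := V → C ≃ Fin m

/-- `dpos r a b` is `v(ab) = v(b) - v(a)`, the signed difference of the positions of
`b` and `a` in the ranking `r` (the `+1` shifts cancel). -/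
def dpos {C : Type*} {m : ℕ} (r : C ≃ Fin m) (a b : C) : ℤ :=
  ((r b : ℕ) : ℤ) - ((r a : ℕ) : ℤ)

/-- `Vab P a b` is `V^{a≻b}`, the set of voters that prefer `a` to `b`. -/
def Vab {V C : Type*} {m : ℕ} [Fintype V] (P : Profile V C m) (a b : C) : Finset V :=
  Finset.univ.filter (fun v => P v a < P v b)

/-- The MaxSwap score of the pair `{a,b}`:
`min(Σ_{v∈V^{a≻b}} v(ab), Σ_{v∈V^{b≻a}} v(ba))`. -/
def swapScore {V C : Type*} {m : ℕ} [Fintype V] (P : Profile V C m) (a b : C) : ℤ :=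
  min (∑ v ∈ Vab P a b, dpos (P v) a b) (∑ v ∈ Vab P b a, dpos (P v) b a)

/-- `{a,b} ∈ MaxSwap(P)`: a pair of distinct candidates whose MaxSwap score is maximal
among all pairs of distinct candidates. -/
def maxSwapSel {V C : Type*} {m : ℕ} [Fintype V] (P : Profile V C m) (a b : C) : Prop :=
  a ≠ b ∧ ∀ x y : C, x ≠ y → swapScore P x y ≤ swapScore P a b

/-- The reversed profile: every voter's ranking is reversed, i.e., the candidate at
position `i` (1-based) moves to position `m + 1 - i`. -/
def reverseProfile {V C : Type*} {m : ℕ} (P : Profile V C m) : Profile V C m :=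
  fun v => (P v).trans Fin.revPerm

lemma Vab_reverse {V C : Type*} {m : ℕ} [Fintype V] (P : Profile V C m) (a b : C) :
    Vab (reverseProfile P) a b = Vab P b a := by
  ext v
  simp [Vab, reverseProfile, Fin.rev_lt_rev]

lemma dpos_reverse {C : Type*} {m : ℕ} (r : C ≃ Fin m) (a b : C) :
    dpos (r.trans Fin.revPerm) a b = dpos r b a := by
  simp only [dpos, Equiv.trans_apply, Fin.revPerm_apply, Fin.val_rev]
  have ha : (r a : ℕ) < m := (r a).isLt
  have hb : (r b : ℕ) < m := (r b).isLt
  omega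

lemma swapScore_reverse {V C : Type*} {m : ℕ} [Fintype V] (P : Profile V C m) (a b : C) :
    swapScore (reverseProfile P) a b = swapScore P a b := by
  unfold swapScore
  rw [Vab_reverse, Vab_reverse]
  simp only [reverseProfile, dpos_reverse]
  exact min_comm _ _

/-- MaxSwap is reverse stable: `MaxSwap(P) = MaxSwap(P̄)`, where `P̄`
is the profile with every voter's ranking reversed. -/
theorem maxSwap_reverseStable {V C : Type*} [Fintype V] {m : ℕ} (P : Profile V C m)
    (a b : C) :
    maxSwapSel P a b ↔ maxSwapSel (reverseProfile P) a b := by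
  unfold maxSwapSel
  simp only [swapScore_reverse]
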